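/- arXiv:2401.15041 — 6 statements merged into one kernel-verified Lean document; each statement's English description precedes it below -/
import Mathlib

section
/- Let ≡ be a binary relation on 𝕋 that is reflexive and transitive. Then the compiler ⟦·⟧ satisfies predRHC(≡, ρ_T, ρ_S) if and only if ⟦·⟧ satisfies predRHP(H^≡_{ρ_S}, ρ_T, ρ_S), where H^≡_{ρ_S} is the class of hyperproperties H^≡_{ρ_S}(F) for source partial programs F. (Theorem 'predRHC is predRHP'.) -/
/-- Indistinguishability of ensembles of binary probability distributions:
for every `c` there is `N` such that for all `n > N`, `|X n - Y n| < n^(-c)`. -/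
def Indist (X Y : ℕ → ℝ) : Prop :=
  ∀ c : ℕ, ∃ N : ℕ, ∀ n : ℕ, n > N → |X n - Y n| < ((n : ℝ) ^ c)⁻¹

/-- Computational indistinguishability of sets of traces, w.r.t. a class `PPT`
of environments and a restriction operation `res`. -/
def CompInd {Trace Env : Type*} (PPT : Set Env)
    (res : Set Trace → Env → ℕ → ℝ) (T₁ T₂ : Set Trace) : Prop :=
  ∀ Z ∈ PPT, Indist (res T₁ Z) (res T₂ Z)

/-- Statistical indistinguishability of sets of traces: indistinguishable
ensembles for *every* environment. -/
def StatInd {Trace Env : Type*}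
    (res : Set Trace → Env → ℕ → ℝ) (T₁ T₂ : Set Trace) : Prop :=
  ∀ Z : Env, Indist (res T₁ Z) (res T₂ Z)

/-- Predicate-Robust Hyperproperty-Preserving Compilation (predRHC). -/
def predRHC {Trace SP SC SW TP TC TW : Type*}
    (linkS : SC → SP → SW) (linkT : TC → TP → TW)
    (behS : SW → Set Trace) (behT : TW → Set Trace)
    (comp : SP → TP)
    (equiv : Set Trace → Set Trace → Prop)
    (ρT : TW → Prop) (ρS : SW → Prop) : Prop :=
  ∀ (P : SP) (CT : TC), ρT (linkT CT (comp P)) →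
    ∃ CS : SC, ρS (linkS CS P) ∧
      equiv (behT (linkT CT (comp P))) (behS (linkS CS P))

/-- Predicate-Robust Hyperproperty Preservation (predRHP) for a class `X`
of hyperproperties. -/
def predRHP {Trace SP SC SW TP TC TW : Type*}
    (linkS : SC → SP → SW) (linkT : TC → TP → TW)
    (behS : SW → Set Trace) (behT : TW → Set Trace)
    (comp : SP → TP)
    (X : Set (Set (Set Trace)))
    (ρT : TW → Prop) (ρS : SW → Prop) : Prop :=
  ∀ H ∈ X, ∀ P : SP,
    (∀ CS : SC, ρS (linkS CS P) → behS (linkS CS P) ∈ H) →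
    (∀ CT : TC, ρT (linkT CT (comp P)) → behT (linkT CT (comp P)) ∈ H)

/-- The hyperproperty `H^≡_{ρS}(F)`: behaviors equivalent (up to `equiv`) to
those of `F` linked with some source context satisfying `ρS`. -/
def HypEq {Trace SP SC SW : Type*}
    (linkS : SC → SP → SW) (behS : SW → Set Trace)
    (equiv : Set Trace → Set Trace → Prop) (ρS : SW → Prop)
    (F : SP) : Set (Set Trace) :=
  {T | ∃ S : SC, ρS (linkS S F) ∧ equiv T (behS (linkS S F))}

/-- The class `H^≡_{ρS}` of all hyperproperties `H^≡_{ρS}(F)`. -/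
def HypEqCls {Trace SP SC SW : Type*}
    (linkS : SC → SP → SW) (behS : SW → Set Trace)
    (equiv : Set Trace → Set Trace → Prop) (ρS : SW → Prop) :
    Set (Set (Set Trace)) :=
  {H | ∃ F : SP, H = HypEq linkS behS equiv ρS F}

/-- The emulation set `Emul(≡, ρQ, ρF)(Q)`: source partial programs `F`
emulated by the partial program `Q`. -/
def Emul {Trace QP QC QW FP FC FW : Type*}
    (linkQ : QC → QP → QW) (behQ : QW → Set Trace)
    (linkF : FC → FP → FW) (behF : FW → Set Trace)
    (equiv : Set Trace → Set Trace → Prop)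
    (ρQ : QW → Prop) (ρF : FW → Prop)
    (Q : QP) : Set FP :=
  {F | ∀ A : QC, ρQ (linkQ A Q) →
    ∃ S : FC, ρF (linkF S F) ∧ equiv (behQ (linkQ A Q)) (behF (linkF S F))}

/-- Robust Hyperproperty-Preserving Compilation (RHC). -/
def RHC {Trace SP SC SW TP TC TW : Type*}
    (linkS : SC → SP → SW) (linkT : TC → TP → TW)
    (behS : SW → Set Trace) (behT : TW → Set Trace)
    (comp : SP → TP) : Prop :=
  ∀ (P : SP) (CT : TC), ∃ CS : SC,
    behT (linkT CT (comp P)) = behS (linkS CS P)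

/-- Computationally-Robust Hyperproperty-Preserving Compilation (compRHC). -/
def compRHC {Trace Env SP SC SW TP TC TW : Type*}
    (linkS : SC → SP → SW) (linkT : TC → TP → TW)
    (behS : SW → Set Trace) (behT : TW → Set Trace)
    (comp : SP → TP)
    (PPT : Set Env) (res : Set Trace → Env → ℕ → ℝ)
    (polyT : TW → Prop) (polyS : SW → Prop) : Prop :=
  ∀ (P : SP) (CT : TC), polyT (linkT CT (comp P)) →
    ∃ CS : SC, polyS (linkS CS P) ∧
      CompInd PPT res (behT (linkT CT (comp P))) (behS (linkS CS P))

/-- Computational UC emulation: `π` computationally UC-emulates `F`. -/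
def compUC {Env TP TC TW SP SC SW : Type*}
    (linkT : TC → TP → TW) (linkS : SC → SP → SW)
    (polyT : TW → Prop) (polyS : SW → Prop)
    (PPT : Set Env)
    (ExecT : Env → TC → TP → ℕ → ℝ)
    (ExecS : Env → SC → SP → ℕ → ℝ)
    (π : TP) (F : SP) : Prop :=
  ∀ A : TC, polyT (linkT A π) →
    ∃ S : SC, polyS (linkS S F) ∧
      ∀ Z ∈ PPT, Indist (ExecT Z A π) (ExecS Z S F)

/-- predRHC is predRHP (Theorem `predRHC is predRHP`). -/
theorem predRHC_iff_predRHP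
    {Trace SP SC SW TP TC TW : Type*}
    (linkS : SC → SP → SW) (linkT : TC → TP → TW)
    (behS : SW → Set Trace) (behT : TW → Set Trace)
    (comp : SP → TP)
    (equiv : Set Trace → Set Trace → Prop)
    (ρT : TW → Prop) (ρS : SW → Prop)
    (hrefl : ∀ T : Set Trace, equiv T T)
    (htrans : ∀ T₁ T₂ T₃ : Set Trace, equiv T₁ T₂ → equiv T₂ T₃ → equiv T₁ T₃) :
    predRHC linkS linkT behS behT comp equiv ρT ρS ↔
      predRHP linkS linkT behS behT comp (HypEqCls linkS behS equiv ρS) ρT ρS := by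
  constructor
  · rintro hRHC H ⟨F, rfl⟩ P hprem CT hρT
    obtain ⟨CS, hCS, heq⟩ := hRHC P CT hρT
    obtain ⟨S, hS, heq2⟩ := hprem CS hCS
    exact ⟨S, hS, htrans _ _ _ heq heq2⟩
  · intro hRHP P CT hρT
    exact hRHP (HypEq linkS behS equiv ρS P) ⟨P, rfl⟩ P
      (fun CS hCS => ⟨CS, hCS, hrefl _⟩) CT hρT
end

section
/- Let ≡ be a binary relation on 𝕋, ρ_T a predicate on target whole programs, and ρ_S a predicate on source whole programs. Then the compiler ⟦·⟧ satisfies predRHP(H^≡_{ρ_S}, ρ_T, ρ_S) if and only if for every source partial program P, Emul(≡, ρ_S, ρ_S)(P) ⊆ Emul(≡, ρ_T, ρ_S)(⟦P⟧). (Lemma 'Emulation specifies predRHP'.) -/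
/-- Emulation specifies predRHP (Lemma `Emulation specifies predRHP`). -/
theorem emulation_specifies_predRHP
    {Trace SP SC SW TP TC TW : Type*}
    (linkS : SC → SP → SW) (linkT : TC → TP → TW)
    (behS : SW → Set Trace) (behT : TW → Set Trace)
    (comp : SP → TP)
    (equiv : Set Trace → Set Trace → Prop)
    (ρT : TW → Prop) (ρS : SW → Prop) :
    predRHP linkS linkT behS behT comp (HypEqCls linkS behS equiv ρS) ρT ρS ↔
      ∀ P : SP, Emul linkS behS linkS behS equiv ρS ρS P ⊆
        Emul linkT behT linkS behS equiv ρT ρS (comp P) := by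
  constructor
  · intro h P F hF CT hCT
    exact h (HypEq linkS behS equiv ρS F) ⟨F, rfl⟩ P hF CT hCT
  · rintro h H ⟨F, rfl⟩ P hP CT hCT
    exact h P hP CT hCT
end

section
/- Let ≡ be a binary relation on 𝕋 that is reflexive and transitive. Then for every source partial program F and every target partial program Q: F ∈ Emul(≡, ρ_T, ρ_S)(Q) if and only if Emul(≡, ρ_S, ρ_S)(F) ⊆ Emul(≡, ρ_T, ρ_S)(Q). (Lemma 'Emulation Subset is Containment'.) -/
/-- Emulation Subset is Containment (Lemma `Emulation Subset is Containment`). -/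
theorem emul_subset_is_containment
    {Trace SP SC SW TP TC TW : Type*}
    (linkS : SC → SP → SW) (linkT : TC → TP → TW)
    (behS : SW → Set Trace) (behT : TW → Set Trace)
    (equiv : Set Trace → Set Trace → Prop)
    (ρT : TW → Prop) (ρS : SW → Prop)
    (hrefl : ∀ T : Set Trace, equiv T T)
    (htrans : ∀ T₁ T₂ T₃ : Set Trace, equiv T₁ T₂ → equiv T₂ T₃ → equiv T₁ T₃) :
    ∀ (F : SP) (Q : TP),
      F ∈ Emul linkT behT linkS behS equiv ρT ρS Q ↔
        Emul linkS behS linkS behS equiv ρS ρS F ⊆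
          Emul linkT behT linkS behS equiv ρT ρS Q := by
  intro F Q
  constructor
  · intro hF F' hF' A hA
    obtain ⟨S, hS, hEq⟩ := hF A hA
    obtain ⟨S', hS', hEq'⟩ := hF' S hS
    exact ⟨S', hS', htrans _ _ _ hEq hEq'⟩
  · intro hsub
    exact hsub (fun A hA => ⟨A, hA, hrefl _⟩)
end

section
/- The compiler ⟦·⟧ satisfies compRHC if and only if for every hyperproperty H ∈ CH and every source partial program P: if beh(C_S ▷ P) ∈ H for every source context C_S with poly_S(C_S ▷ P), then beh(C_T ▷ ⟦P⟧) ∈ H for every target context C_T with poly_T(C_T ▷ ⟦P⟧). (Theorem 'compRHC is Computational Preservation of CH'.) -/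
/-- compRHC is computational preservation of the class CH
(Theorem `compRHC is Computational Preservation of CH`). -/
theorem compRHC_is_computational_preservation_of_CH
    {Trace Env SP SC SW TP TC TW : Type*}
    (linkS : SC → SP → SW) (linkT : TC → TP → TW)
    (behS : SW → Set Trace) (behT : TW → Set Trace)
    (comp : SP → TP)
    (PPT : Set Env) (res : Set Trace → Env → ℕ → ℝ)
    (polyT : TW → Prop) (polyS : SW → Prop) :
    compRHC linkS linkT behS behT comp PPT res polyT polyS ↔
      ∀ H ∈ HypEqCls linkS behS (CompInd PPT res) polyS, ∀ P : SP,
        (∀ CS : SC, polyS (linkS CS P) → behS (linkS CS P) ∈ H) →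
        (∀ CT : TC, polyT (linkT CT (comp P)) → behT (linkT CT (comp P)) ∈ H) := by
  have refl_ind : ∀ T : Set Trace, CompInd PPT res T T := by
    intro T Z _ c
    exact ⟨0, fun n hn => by
      simpa using inv_pos.mpr (pow_pos (by exact_mod_cast hn : (0:ℝ) < n) c)⟩
  constructor
  · rintro h H ⟨F, rfl⟩ P hprem CT hCT
    obtain ⟨CS, hCS, hind⟩ := h P CT hCT
    obtain ⟨S, hS, hind2⟩ := hprem CS hCS
    exact ⟨S, hS, fun Z hZ c => by
      obtain ⟨N1, h1⟩ := hind Z hZ (c+1)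
      obtain ⟨N2, h2⟩ := hind2 Z hZ (c+1)
      refine ⟨max (max N1 N2) 1, fun n hn => ?_⟩
      have hn1 : n > N1 := lt_of_le_of_lt (le_max_left _ _) (lt_of_le_of_lt (le_max_left _ _) hn)
      have hn2 : n > N2 := lt_of_le_of_lt (le_max_right _ _) (lt_of_le_of_lt (le_max_left _ _) hn)
      have hn0 : 1 < n := lt_of_le_of_lt (le_max_right _ _) hn
      have hnr : (1:ℝ) < n := by exact_mod_cast hn0
      have key : (((n:ℝ)^(c+1))⁻¹) + (((n:ℝ)^(c+1))⁻¹) ≤ ((n:ℝ)^c)⁻¹ := by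
        have hpow : (0:ℝ) < (n:ℝ)^c := pow_pos (by linarith) c
        have hpow1 : (0:ℝ) < (n:ℝ)^(c+1) := pow_pos (by linarith) (c+1)
        rw [← two_mul, pow_succ, mul_inv]
        have h2n : (2:ℝ) ≤ n := by exact_mod_cast hn0
        have hinv : ((n:ℝ))⁻¹ ≤ 2⁻¹ := by
          apply inv_anti₀ (by norm_num) h2n
        nlinarith [inv_pos.mpr hpow, hinv]
      calc |res (behT (linkT CT (comp P))) Z n - res (behS (linkS S F)) Z n|
          ≤ |res (behT (linkT CT (comp P))) Z n - res (behS (linkS CS P)) Z n| +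
            |res (behS (linkS CS P)) Z n - res (behS (linkS S F)) Z n| := abs_sub_le _ _ _
        _ < ((n:ℝ)^(c+1))⁻¹ + ((n:ℝ)^(c+1))⁻¹ := add_lt_add (h1 n hn1) (h2 n hn2)
        _ ≤ _ := key⟩
  · intro h P CT hCT
    have := h (HypEq linkS behS (CompInd PPT res) polyS P) ⟨P, rfl⟩ P
      (fun CS hCS => ⟨CS, hCS, refl_ind _⟩) CT hCT
    exact this
end

section
/- The compiler ⟦·⟧ satisfies RHC if and only if it robustly preserves all hyperproperties: for every hyperproperty H ⊆ 𝕋 and every source partial program P, if beh(C_S ▷ P) ∈ H for every source context C_S, then beh(C_T ▷ ⟦P⟧) ∈ H for every target context C_T. -/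
/-- RHC iff robust preservation of all hyperproperties. -/
theorem RHC_iff_robust_preservation_of_all_hyperproperties
    {Trace SP SC SW TP TC TW : Type*}
    (linkS : SC → SP → SW) (linkT : TC → TP → TW)
    (behS : SW → Set Trace) (behT : TW → Set Trace)
    (comp : SP → TP) :
    RHC linkS linkT behS behT comp ↔
      ∀ (H : Set (Set Trace)) (P : SP),
        (∀ CS : SC, behS (linkS CS P) ∈ H) →
        (∀ CT : TC, behT (linkT CT (comp P)) ∈ H) := by
  constructor
  · intro h H P hyp CT
    obtain ⟨CS, hCS⟩ := h P CT
    rw [hCS]; exact hyp CS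
  · intro h P CT
    exact h {T | ∃ CS, T = behS (linkS CS P)} P (fun CS => ⟨CS, rfl⟩) CT
end

section
/- Let ≡ be a binary relation on 𝕋 that is reflexive and transitive. Then the following are equivalent: (1) for every source partial program P, P ∈ Emul(≡, ρ_T, ρ_S)(⟦P⟧); (2) for every source partial program P, Emul(≡, ρ_S, ρ_S)(P) ⊆ Emul(≡, ρ_T, ρ_S)(⟦P⟧). -/
/-- self-emulation of compiled programs is equivalent to
inclusion of emulation sets. -/
theorem self_emul_iff_emul_subset
    {Trace SP SC SW TP TC TW : Type*}
    (linkS : SC → SP → SW) (linkT : TC → TP → TW)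
    (behS : SW → Set Trace) (behT : TW → Set Trace)
    (comp : SP → TP)
    (equiv : Set Trace → Set Trace → Prop)
    (ρT : TW → Prop) (ρS : SW → Prop)
    (hrefl : ∀ T : Set Trace, equiv T T)
    (htrans : ∀ T₁ T₂ T₃ : Set Trace, equiv T₁ T₂ → equiv T₂ T₃ → equiv T₁ T₃) :
    (∀ P : SP, P ∈ Emul linkT behT linkS behS equiv ρT ρS (comp P)) ↔
      (∀ P : SP, Emul linkS behS linkS behS equiv ρS ρS P ⊆
        Emul linkT behT linkS behS equiv ρT ρS (comp P)) := by
  constructor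
  · intro h P F hF A hA
    obtain ⟨S1, hS1, he1⟩ := h P A hA
    obtain ⟨S2, hS2, he2⟩ := hF S1 hS1
    exact ⟨S2, hS2, htrans _ _ _ he1 he2⟩
  · intro h P
    exact h P (fun A hA => ⟨A, hA, hrefl _⟩)
end
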